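/- arXiv:quant-ph/0605161 — 5 statements merged into one kernel-verified Lean document; each statement's English description precedes it below -/
import Mathlib

section
/- For integers k ≥ 0, m ≥ 0 and real 0 < γ < 1, we have (1-γ)^(k+1) · Σ_{l=0}^{m} γ^l · C(l+k, k) ≤ 1 - γ^(m+1). That is, the distribution q^k with q^k_l = (1-γ)^(k+1) γ^l C(l+k,k) is stochastically larger than the geometric distribution q^0 with q^0_l = (1-γ)γ^l. -/
lemma negbinom_key (k : ℕ) (γ : ℝ) : ∀ m : ℕ,
    (1 - γ) * ∑ l ∈ Finset.range (m + 1), γ ^ l * ((l + (k + 1)).choose (k + 1) : ℝ) =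
      (∑ l ∈ Finset.range (m + 1), γ ^ l * ((l + k).choose k : ℝ)) -
        γ ^ (m + 1) * ((m + k + 1).choose (k + 1) : ℝ) := by
  intro m
  induction m with
  | zero => simp
  | succ n ih =>
    rw [Finset.sum_range_succ, Finset.sum_range_succ (f := fun l => γ ^ l * ((l + k).choose k : ℝ)),
      mul_add, ih]
    have pascal : ((n + k + 2).choose (k + 1) : ℝ) =
        ((n + k + 1).choose k : ℝ) + ((n + k + 1).choose (k + 1) : ℝ) := by
      rw [show n + k + 2 = (n + k + 1) + 1 by ring, Nat.choose_succ_succ]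
      push_cast; ring
    have e1 : n + 1 + (k + 1) = n + k + 2 := by ring
    have e2 : n + 1 + k = n + k + 1 := by ring
    rw [e1, e2, show n + k + 1 + 1 = n + k + 2 by ring, pascal]
    ring

theorem negbinom_stochastically_larger (k m : ℕ) (γ : ℝ) (h0 : 0 < γ) (h1 : γ < 1) :
    (1 - γ) ^ (k + 1) * ∑ l ∈ Finset.range (m + 1), γ ^ l * ((l + k).choose k : ℝ) ≤
      1 - γ ^ (m + 1) := by
  induction k with
  | zero =>
    have : ∑ l ∈ Finset.range (m + 1), γ ^ l * ((l + 0).choose 0 : ℝ) =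
        ∑ l ∈ Finset.range (m + 1), γ ^ l := by simp
    rw [this, pow_one]
    have := geom_sum_mul γ (m + 1)
    nlinarith [this]
  | succ n ih =>
    have key := negbinom_key n γ m
    have h2 : (0:ℝ) ≤ (1 - γ) ^ (n + 1) := pow_nonneg (by linarith) _
    have h3 : (0:ℝ) ≤ γ ^ (m + 1) * ((m + n + 1).choose (n + 1) : ℝ) := mul_nonneg (pow_nonneg h0.le _) (Nat.cast_nonneg _)
    calc (1 - γ) ^ (n + 1 + 1) * ∑ l ∈ Finset.range (m + 1), γ ^ l * ((l + (n + 1)).choose (n + 1) : ℝ)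
        = (1 - γ) ^ (n + 1) * ((1 - γ) * ∑ l ∈ Finset.range (m + 1), γ ^ l * ((l + (n + 1)).choose (n + 1) : ℝ)) := by ring
      _ = (1 - γ) ^ (n + 1) * ((∑ l ∈ Finset.range (m + 1), γ ^ l * ((l + n).choose n : ℝ)) - γ ^ (m + 1) * ((m + n + 1).choose (n + 1) : ℝ)) := by rw [key]
      _ ≤ (1 - γ) ^ (n + 1) * ∑ l ∈ Finset.range (m + 1), γ ^ l * ((l + n).choose n : ℝ) := by nlinarith
      _ ≤ 1 - γ ^ (m + 1) := ih
end

section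
/- Let p and q be probability distributions on ℕ with p_l = (1-s)s^l and q_l = (1-t)t^l, 0 ≤ s < t < 1. Then the total variation (ℓ¹) distance satisfies Σ_{l=0}^{∞} |p_l - q_l| = 2 sup_{m ∈ ℕ} Σ_{l=0}^{m} (p_l - q_l) = 2 t^(m₀+1) - 2 s^(m₀+1), where m₀ is the largest integer with (1-s)s^{m₀} ≥ (1-t)t^{m₀}. -/
theorem geometric_l1_distance (s t : ℝ) (hs : 0 ≤ s) (hst : s < t) (ht : t < 1)
    (m₀ : ℕ) (hm₀ : IsGreatest {l : ℕ | (1 - s) * s ^ l ≥ (1 - t) * t ^ l} m₀) :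
    (∑' l : ℕ, |(1 - s) * s ^ l - (1 - t) * t ^ l| =
      2 * ⨆ m : ℕ, ∑ l ∈ Finset.range (m + 1), ((1 - s) * s ^ l - (1 - t) * t ^ l)) ∧
    ∑' l : ℕ, |(1 - s) * s ^ l - (1 - t) * t ^ l| =
      2 * t ^ (m₀ + 1) - 2 * s ^ (m₀ + 1) := by
  obtain ⟨hmem, hub⟩ := hm₀
  have ht0 : 0 < t := lt_of_le_of_lt hs hst
  have hs1 : s < 1 := hst.trans ht
  -- pointwise comparison below the crossing point
  have hAB_le : ∀ l : ℕ, l ≤ m₀ → (1 - t) * t ^ l ≤ (1 - s) * s ^ l := by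
    intro l hl
    obtain ⟨k, rfl⟩ := Nat.exists_eq_add_of_le hl
    have h1 : (1 - t) * t ^ (l + k) ≤ (1 - s) * s ^ (l + k) := hmem
    have h2 : (1 - s) * s ^ (l + k) ≤ ((1 - s) * s ^ l) * t ^ k := by
      rw [pow_add, ← mul_assoc]
      exact mul_le_mul_of_nonneg_left (pow_le_pow_left₀ hs hst.le k)
        (mul_nonneg (by linarith) (pow_nonneg hs l))
    have h3 : ((1 - t) * t ^ l) * t ^ k ≤ ((1 - s) * s ^ l) * t ^ k := by
      calc ((1 - t) * t ^ l) * t ^ k = (1 - t) * t ^ (l + k) := by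
            rw [pow_add]; ring
        _ ≤ (1 - s) * s ^ (l + k) := h1
        _ ≤ ((1 - s) * s ^ l) * t ^ k := h2
    exact le_of_mul_le_mul_right h3 (pow_pos ht0 k)
  have hAB_lt : ∀ l : ℕ, m₀ < l → (1 - s) * s ^ l < (1 - t) * t ^ l := by
    intro l hl
    by_contra h
    push_neg at h
    exact hl.not_ge (hub h)
  -- closed form for geometric partial sums
  have hsum : ∀ (x : ℝ) (n : ℕ), ∑ l ∈ Finset.range n, (1 - x) * x ^ l = 1 - x ^ n := by
    intro x n
    induction n with
    | zero => simp
    | succ n ih => rw [Finset.sum_range_succ, ih]; ring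
  have hS : ∀ m : ℕ, ∑ l ∈ Finset.range (m + 1), ((1 - s) * s ^ l - (1 - t) * t ^ l)
      = t ^ (m + 1) - s ^ (m + 1) := by
    intro m
    rw [Finset.sum_sub_distrib, hsum, hsum]
    ring
  -- summability
  have hsumA : Summable (fun l : ℕ => (1 - s) * s ^ l) :=
    (summable_geometric_of_lt_one hs hs1).mul_left _
  have hsumB : Summable (fun l : ℕ => (1 - t) * t ^ l) :=
    (summable_geometric_of_lt_one ht0.le ht).mul_left _
  have hsummable : Summable (fun l : ℕ => |(1 - s) * s ^ l - (1 - t) * t ^ l|) :=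
    (hsumA.sub hsumB).abs
  -- tail sums of geometric
  have htail : ∀ (x : ℝ), 0 ≤ x → x < 1 →
      ∑' i : ℕ, (1 - x) * x ^ (i + (m₀ + 1)) = x ^ (m₀ + 1) := by
    intro x hx0 hx1
    have h1 : ∀ i : ℕ, (1 - x) * x ^ (i + (m₀ + 1)) = ((1 - x) * x ^ (m₀ + 1)) * x ^ i := by
      intro i; rw [pow_add]; ring
    rw [tsum_congr h1, tsum_mul_left, tsum_geometric_of_lt_one hx0 hx1]
    have : (1 : ℝ) - x ≠ 0 := by linarith
    field_simp

  -- split the tsum at m₀ + 1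
  have hsplit := Summable.sum_add_tsum_nat_add (m₀ + 1) hsummable
  have hfront : ∑ l ∈ Finset.range (m₀ + 1), |(1 - s) * s ^ l - (1 - t) * t ^ l|
      = t ^ (m₀ + 1) - s ^ (m₀ + 1) := by
    rw [← hS m₀]
    apply Finset.sum_congr rfl
    intro l hl
    rw [Finset.mem_range, Nat.lt_succ_iff] at hl
    exact abs_of_nonneg (by linarith [hAB_le l hl])
  have hback : ∑' i : ℕ, |(1 - s) * s ^ (i + (m₀ + 1)) - (1 - t) * t ^ (i + (m₀ + 1))|
      = t ^ (m₀ + 1) - s ^ (m₀ + 1) := by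
    have h1 : ∀ i : ℕ, |(1 - s) * s ^ (i + (m₀ + 1)) - (1 - t) * t ^ (i + (m₀ + 1))|
        = (1 - t) * t ^ (i + (m₀ + 1)) - (1 - s) * s ^ (i + (m₀ + 1)) := by
      intro i
      have := hAB_lt (i + (m₀ + 1)) (by omega)
      rw [abs_of_nonpos (by linarith)]
      ring
    rw [tsum_congr h1,
      Summable.tsum_sub ((summable_nat_add_iff _).2 hsumB) ((summable_nat_add_iff _).2 hsumA),
      htail t ht0.le ht, htail s hs hs1]
  have htotal : ∑' l : ℕ, |(1 - s) * s ^ l - (1 - t) * t ^ l|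
      = 2 * t ^ (m₀ + 1) - 2 * s ^ (m₀ + 1) := by
    rw [← hsplit, hfront, hback]; ring
  refine ⟨?_, htotal⟩
  -- the supremum is attained at m₀
  have hSle : ∀ m : ℕ, ∑ l ∈ Finset.range (m + 1), ((1 - s) * s ^ l - (1 - t) * t ^ l)
      ≤ ∑ l ∈ Finset.range (m₀ + 1), ((1 - s) * s ^ l - (1 - t) * t ^ l) := by
    intro m
    rcases le_total m m₀ with h | h
    · have hsplit2 := Finset.sum_Ico_consecutive
        (fun l => (1 - s) * s ^ l - (1 - t) * t ^ l)
        (Nat.zero_le (m + 1)) (Nat.succ_le_succ h)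
      simp only [Nat.succ_eq_add_one] at hsplit2
      have hpos : 0 ≤ ∑ l ∈ Finset.Ico (m + 1) (m₀ + 1), ((1 - s) * s ^ l - (1 - t) * t ^ l) := by
        apply Finset.sum_nonneg
        intro l hl
        rw [Finset.mem_Ico] at hl
        linarith [hAB_le l (by omega)]
      simp only [Finset.range_eq_Ico]
      linarith
    · have hsplit2 := Finset.sum_Ico_consecutive
        (fun l => (1 - s) * s ^ l - (1 - t) * t ^ l)
        (Nat.zero_le (m₀ + 1)) (Nat.succ_le_succ h)
      simp only [Nat.succ_eq_add_one] at hsplit2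
      have hneg : ∑ l ∈ Finset.Ico (m₀ + 1) (m + 1), ((1 - s) * s ^ l - (1 - t) * t ^ l) ≤ 0 := by
        apply Finset.sum_nonpos
        intro l hl
        rw [Finset.mem_Ico] at hl
        linarith [hAB_lt l (by omega)]
      simp only [Finset.range_eq_Ico]
      linarith
  have hsup : (⨆ m : ℕ, ∑ l ∈ Finset.range (m + 1), ((1 - s) * s ^ l - (1 - t) * t ^ l))
      = t ^ (m₀ + 1) - s ^ (m₀ + 1) := by
    rw [← hS m₀]
    apply le_antisymm
    · exact ciSup_le hSle
    · exact le_ciSup ⟨_, Set.forall_mem_range.2 hSle⟩ m₀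
  rw [htotal, hsup]
  ring
end

section
/- With s ∈ [0,1), t = (1+s)/2, and m₀ the integer part of log 2 / (log(1+s) - log(2s)) (for s > 0), the ℓ¹ distance between the geometric distributions with parameters s and t equals 2((1+s)/2)^(m₀+1) - 2 s^(m₀+1). -/
/-!
Since `1 - t = (1 - s) / 2`, the amplified weight `(1 - t) t^l` is at most the thermal weight
`(1 - s) s^l` exactly when `((1 + s) / (2 s))^l ≤ 2`, i.e. when `l ≤ m₀`. For two distributions
of equal mass that cross once, the `ℓ¹` distance is twice the excess of the larger one before the
crossing, and the geometric partial sums up to `m₀` are `1 - s^(m₀+1)` and `1 - t^(m₀+1)`.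
-/

open Finset Real

theorem hasSum_one_sub_mul_pow {R : Type*} [Ring R] [TopologicalSpace R] [IsTopologicalRing R]
    [T2Space R] {x : R} (h : Summable (x ^ ·)) : HasSum (fun n ↦ (1 - x) * x ^ n) 1 := by
  simpa only [h.one_sub_mul_tsum_pow] using h.hasSum.mul_left (1 - x)

theorem tsum_abs_sub_eq_two_mul_sum_range {p q : ℕ → ℝ} {a : ℝ} (hp : HasSum p a)
    (hq : HasSum q a) (N : ℕ) (hlt : ∀ l < N, q l ≤ p l) (hge : ∀ l, N ≤ l → p l ≤ q l) :
    ∑' l, |p l - q l| = 2 * ∑ l ∈ range N, (p l - q l) := by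
  have hzero : HasSum (fun l ↦ p l - q l) 0 := by simpa using hp.sub hq
  have hhead : ∑ l ∈ range N, |p l - q l| = ∑ l ∈ range N, (p l - q l) :=
    sum_congr rfl fun l hl ↦ abs_of_nonneg (sub_nonneg.2 (hlt l (mem_range.1 hl)))
  have htail : ∑' l, |p (l + N) - q (l + N)| = -∑' l, (p (l + N) - q (l + N)) := by
    rw [← tsum_neg]
    exact tsum_congr fun l ↦ abs_of_nonpos (sub_nonpos.2 (hge _ (Nat.le_add_left N l)))
  have hsplit : ∑ l ∈ range N, (p l - q l) + ∑' l, (p (l + N) - q (l + N)) = 0 := by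
    rw [hzero.summable.sum_add_tsum_nat_add N, hzero.tsum_eq]
  rw [← hzero.summable.abs.sum_add_tsum_nat_add N, hhead, htail]
  linarith

theorem pow_le_iff_le_floor_log_div_log {r c : ℝ} (hr : 1 < r) (hc : 1 ≤ c) (l : ℕ) :
    r ^ l ≤ c ↔ l ≤ ⌊log c / log r⌋₊ := by
  have hlogr : 0 < log r := log_pos hr
  rw [pow_le_iff_le_log (by linarith) (by linarith), ← le_div_iff₀ hlogr,
    Nat.le_floor_iff (div_nonneg (log_nonneg hc) hlogr.le)]

theorem amplified_le_thermal_iff {s : ℝ} (hs0 : 0 < s) (hs1 : s < 1) (l : ℕ) :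
    (1 - (1 + s) / 2) * ((1 + s) / 2) ^ l ≤ (1 - s) * s ^ l ↔
      l ≤ ⌊log 2 / (log (1 + s) - log (2 * s))⌋₊ := by
  have hratio : 1 < (1 + s) / (2 * s) := by rw [one_lt_div (by positivity)]; linarith
  have hpos : 0 < 1 - s := by linarith
  rw [← log_div (by positivity) (by positivity),
    ← pow_le_iff_le_floor_log_div_log hratio one_le_two,
    show (1 + s) / (2 * s) = (1 + s) / 2 / s by field_simp, div_pow ((1 + s) / 2) s l,
    div_le_iff₀ (by positivity), show 1 - (1 + s) / 2 = (1 - s) / 2 by ring]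
  constructor <;> intro h <;> nlinarith

theorem thermal_amplified_l1_distance (s : ℝ) (hs0 : 0 < s) (hs1 : s < 1) :
    let t := (1 + s) / 2
    let m₀ := ⌊Real.log 2 / (Real.log (1 + s) - Real.log (2 * s))⌋₊
    ∑' l : ℕ, |(1 - s) * s ^ l - (1 - t) * t ^ l| =
      2 * ((1 + s) / 2) ^ (m₀ + 1) - 2 * s ^ (m₀ + 1) := by
  intro t m₀
  have ht0 : 0 ≤ t := by positivity
  have ht1 : t < 1 := by simp only [t]; linarith
  have hcross := amplified_le_thermal_iff hs0 hs1
  rw [tsum_abs_sub_eq_two_mul_sum_range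
      (hasSum_one_sub_mul_pow (summable_geometric_of_lt_one hs0.le hs1))
      (hasSum_one_sub_mul_pow (summable_geometric_of_lt_one ht0 ht1)) (m₀ + 1)
      (fun l hl ↦ (hcross l).2 (Nat.lt_succ_iff.1 hl))
      (fun l hl ↦ (not_le.1 fun h ↦ hl.not_gt (Nat.lt_succ_of_le ((hcross l).1 h))).le),
    sum_sub_distrib, ← mul_sum, ← mul_sum, mul_neg_geom_sum, mul_neg_geom_sum]
  ring
end

section
/- Let p be a probability distribution on ℕ and let q, q' be probability distributions on ℕ with q' stochastically smaller than q (i.e. Σ_{l=0}^{m} q'_l ≥ Σ_{l=0}^{m} q_l for all m). Suppose moreover that there exists m₀ with p_l ≥ q'_l for l ≤ m₀ and p_l ≤ q'_l for l > m₀ (p and q' cross exactly once, p above first). Then Σ_l |p_l - q_l| ≥ Σ_l |p_l - q'_l|. -/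
theorem single_crossing_stochastic_order_l1 (p q q' : ℕ → ℝ)
    (hp : ∀ l, 0 ≤ p l) (hq : ∀ l, 0 ≤ q l) (hq' : ∀ l, 0 ≤ q' l)
    (hps : ∑' l, p l = 1) (hqs : ∑' l, q l = 1) (hq's : ∑' l, q' l = 1)
    (hstoch : ∀ m : ℕ, ∑ l ∈ Finset.range (m + 1), q' l ≥ ∑ l ∈ Finset.range (m + 1), q l)
    (m₀ : ℕ) (hcross₁ : ∀ l ≤ m₀, p l ≥ q' l) (hcross₂ : ∀ l, m₀ < l → p l ≤ q' l) :
    ∑' l, |p l - q l| ≥ ∑' l, |p l - q' l| := by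
  have sp : Summable p := by
    by_contra h; rw [tsum_eq_zero_of_not_summable h] at hps; norm_num at hps
  have sq : Summable q := by
    by_contra h; rw [tsum_eq_zero_of_not_summable h] at hqs; norm_num at hqs
  have sq' : Summable q' := by
    by_contra h; rw [tsum_eq_zero_of_not_summable h] at hq's; norm_num at hq's
  have sf : Summable (fun l => p l - q l) := sp.sub sq
  have sg : Summable (fun l => p l - q' l) := sp.sub sq'
  have key : ∀ (r : ℕ → ℝ), Summable r → ∑' l, r l = 0 →
      ∑' l, |r l| = 2 * ∑' l, max (r l) 0 := by
    intro r hr hr0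
    have hmax : Summable (fun l => max (r l) 0) :=
      Summable.of_nonneg_of_le (fun l => le_max_right _ _)
        (fun l => max_le (le_abs_self _) (abs_nonneg _)) hr.abs
    have habs : ∀ l, |r l| = 2 * max (r l) 0 - r l := by
      intro l; rcases le_or_gt 0 (r l) with h | h
      · rw [abs_of_nonneg h, max_eq_left h]; ring
      · rw [abs_of_neg h, max_eq_right h.le]; ring
    calc ∑' l, |r l| = ∑' l, (2 * max (r l) 0 - r l) := by simp_rw [habs]
      _ = 2 * (∑' l, max (r l) 0) - ∑' l, r l := by
          rw [Summable.tsum_sub (hmax.mul_left 2) hr, tsum_mul_left]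
      _ = 2 * ∑' l, max (r l) 0 := by rw [hr0]; ring
  have hf0 : ∑' l, (p l - q l) = 0 := by rw [Summable.tsum_sub sp sq, hps, hqs]; ring
  have hg0 : ∑' l, (p l - q' l) = 0 := by rw [Summable.tsum_sub sp sq', hps, hq's]; ring
  have heq : ∑' l, |p l - q' l| = 2 * ∑ l ∈ Finset.range (m₀ + 1), (p l - q' l) := by
    rw [key _ sg hg0]
    congr 1
    have h1 : ∑' l, max (p l - q' l) 0 = ∑ l ∈ Finset.range (m₀ + 1), max (p l - q' l) 0 := by
      apply tsum_eq_sum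
      intro l hl
      simp only [Finset.mem_range] at hl
      exact max_eq_right (sub_nonpos.2 (hcross₂ l (by omega)))
    rw [h1]
    apply Finset.sum_congr rfl
    intro l hl
    simp only [Finset.mem_range] at hl
    exact max_eq_left (sub_nonneg.2 (hcross₁ l (by omega)))
  have hle : ∑ l ∈ Finset.range (m₀ + 1), (p l - q' l)
      ≤ ∑ l ∈ Finset.range (m₀ + 1), (p l - q l) := by
    rw [Finset.sum_sub_distrib, Finset.sum_sub_distrib]
    have := hstoch m₀
    linarith
  have hmaxf : Summable (fun l => max (p l - q l) 0) :=
    Summable.of_nonneg_of_le (fun l => le_max_right _ _)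
      (fun l => max_le (le_abs_self _) (abs_nonneg _)) sf.abs
  have hle2 : ∑ l ∈ Finset.range (m₀ + 1), (p l - q l) ≤ ∑' l, max (p l - q l) 0 := by
    calc ∑ l ∈ Finset.range (m₀ + 1), (p l - q l)
        ≤ ∑ l ∈ Finset.range (m₀ + 1), max (p l - q l) 0 :=
          Finset.sum_le_sum (fun l _ => le_max_left _ _)
      _ ≤ ∑' l, max (p l - q l) 0 :=
          Summable.sum_le_tsum _ (fun l _ => le_max_right _ _) hmaxf
  rw [heq, key _ sf hf0]
  linarith
end

section
/- For 0 < s < 1, let t = (1+s)/2. The optimal cloning deficiency δ(s) = 2 t^(m₀+1) - 2 s^(m₀+1), with m₀ = ⌊log 2 / (log(1+s) - log(2s))⌋, satisfies δ(s) → 1/2 as s → 1⁻. -/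
/-- The optimal 1→2 cloning deficiency for displaced thermal states with parameter `s`. -/
noncomputable def cloningDeficiency (s : ℝ) : ℝ :=
  2 * ((1 + s) / 2) ^ (⌊Real.log 2 / (Real.log (1 + s) - Real.log (2 * s))⌋₊ + 1) -
    2 * s ^ (⌊Real.log 2 / (Real.log (1 + s) - Real.log (2 * s))⌋₊ + 1)

open Real Filter Set

noncomputable def Lf (s : ℝ) : ℝ := Real.log (1 + s) - Real.log (2 * s)

noncomputable def mf (s : ℝ) : ℕ := ⌊Real.log 2 / Lf s⌋₊

lemma Lf_pos {s : ℝ} (hs : s ∈ Ioo (0:ℝ) 1) : 0 < Lf s := by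
  have : Real.log (2 * s) < Real.log (1 + s) :=
    Real.log_lt_log (by linarith [hs.1]) (by linarith [hs.2])
  simpa [Lf] using sub_pos.mpr this

lemma Lf_tendsto : Filter.Tendsto Lf (nhdsWithin 1 (Ioo 0 1)) (nhds 0) := by
  have h1 : ContinuousAt (fun s : ℝ => Real.log (1 + s)) 1 :=
    (Real.continuousAt_log (by norm_num)).comp (continuousAt_const.add continuousAt_id)
  have h2 : ContinuousAt (fun s : ℝ => Real.log (2 * s)) 1 :=
    (Real.continuousAt_log (by norm_num)).comp (continuousAt_const.mul continuousAt_id)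
  have h : ContinuousWithinAt Lf (Ioo 0 1) 1 := (h1.sub h2).continuousWithinAt
  have h0 : Lf 1 = 0 := by norm_num [Lf]
  have h' : Filter.Tendsto Lf (nhdsWithin 1 (Ioo 0 1)) (nhds (Lf 1)) := h
  rwa [h0] at h' 

lemma hasDerivAt_Lf : HasDerivAt Lf (-(1/2)) 1 := by
  have h1 : HasDerivAt (fun s : ℝ => Real.log (1 + s)) (1 / (1 + 1)) 1 :=
    (((hasDerivAt_id (1:ℝ)).const_add 1).log (by norm_num))
  have h2 : HasDerivAt (fun s : ℝ => Real.log (2 * s)) (2 * 1 / (2 * 1)) 1 :=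
    ((HasDerivAt.const_mul 2 (hasDerivAt_id' 1)).log (by norm_num))
  have := h1.sub h2
  have e : (1 / (1 + 1) - 2 * 1 / (2 * 1) : ℝ) = -(1/2) := by norm_num
  rw [e] at this
  exact this

lemma nhds_le : nhdsWithin (1:ℝ) (Ioo 0 1) ≤ nhdsWithin (1:ℝ) {(1:ℝ)}ᶜ :=
  nhdsWithin_mono 1 (fun x hx => by exact fun h => absurd (h ▸ hx.2) (lt_irrefl 1))

lemma ratio_tendsto (f : ℝ → ℝ) (c : ℝ) (hf : HasDerivAt f c 1) (hf0 : f 1 = 0) :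
    Filter.Tendsto (fun s => f s / Lf s) (nhdsWithin 1 (Ioo 0 1)) (nhds (c / (-(1/2)))) := by
  have hsf : Filter.Tendsto (slope f 1) (nhdsWithin 1 {(1:ℝ)}ᶜ) (nhds c) :=
    hasDerivAt_iff_tendsto_slope.mp hf
  have hsL : Filter.Tendsto (slope Lf 1) (nhdsWithin 1 {(1:ℝ)}ᶜ) (nhds (-(1/2))) :=
    hasDerivAt_iff_tendsto_slope.mp hasDerivAt_Lf
  have hdiv := (hsf.div hsL (by norm_num)).mono_left nhds_le
  have hL1 : Lf 1 = 0 := by norm_num [Lf]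
  refine hdiv.congr' ?_
  filter_upwards [self_mem_nhdsWithin] with s hs
  have hne : s - 1 ≠ 0 := sub_ne_zero.mpr (ne_of_lt hs.2)
  simp only [Pi.div_apply]
  rw [slope_def_field, slope_def_field, hf0, hL1, sub_zero, sub_zero,
    div_div_div_cancel_right₀ hne]

lemma mul_L_tendsto :
    Filter.Tendsto (fun s => ((mf s : ℝ) + 1) * Lf s) (nhdsWithin 1 (Ioo 0 1))
      (nhds (Real.log 2)) := by
  have hlog2 : (0:ℝ) < Real.log 2 := Real.log_pos (by norm_num)
  apply tendsto_of_tendsto_of_tendsto_of_le_of_le'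
    (tendsto_const_nhds : Filter.Tendsto (fun _ : ℝ => Real.log 2) _ (nhds (Real.log 2)))
    (by simpa using tendsto_const_nhds.add Lf_tendsto :
      Filter.Tendsto (fun s => Real.log 2 + Lf s) (nhdsWithin 1 (Ioo 0 1)) (nhds (Real.log 2)))
  · filter_upwards [self_mem_nhdsWithin] with s hs
    have hL := Lf_pos hs
    have hx : Real.log 2 / Lf s < (mf s : ℝ) + 1 := Nat.lt_floor_add_one _
    have := (div_lt_iff₀ hL).mp hx
    linarith
  · filter_upwards [self_mem_nhdsWithin] with s hs
    have hL := Lf_pos hs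
    have hx : (mf s : ℝ) ≤ Real.log 2 / Lf s :=
      Nat.floor_le (div_nonneg hlog2.le hL.le)
    have := (le_div_iff₀ hL).mp hx
    nlinarith

lemma A_tendsto :
    Filter.Tendsto (fun s => ((mf s : ℝ) + 1) * Real.log ((1 + s) / 2))
      (nhdsWithin 1 (Ioo 0 1)) (nhds (-Real.log 2)) := by
  have hf : HasDerivAt (fun s : ℝ => Real.log ((1 + s) / 2)) ((1/2) / ((1+1)/2)) 1 :=
    ((((hasDerivAt_id (1:ℝ)).const_add 1).div_const 2).log (by norm_num))
  have hr := ratio_tendsto _ _ hf (by norm_num)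
  have h := mul_L_tendsto.mul hr
  have hval : Real.log 2 * ((1/2) / ((1+1)/2) / (-(1/2))) = -Real.log 2 := by norm_num
  rw [hval] at h
  refine h.congr' ?_
  filter_upwards [self_mem_nhdsWithin] with s hs
  have hL := (Lf_pos hs).ne'
  field_simp

lemma B_tendsto :
    Filter.Tendsto (fun s => ((mf s : ℝ) + 1) * Real.log s)
      (nhdsWithin 1 (Ioo 0 1)) (nhds (-(2 * Real.log 2))) := by
  have hf : HasDerivAt (fun s : ℝ => Real.log s) (1/1) 1 :=
    ((hasDerivAt_id (1:ℝ)).log (by norm_num))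
  have hr := ratio_tendsto _ _ hf (by simp)
  have h := mul_L_tendsto.mul hr
  have hval : Real.log 2 * (1/1 / (-(1/2))) = -(2 * Real.log 2) := by ring
  rw [hval] at h
  refine h.congr' ?_
  filter_upwards [self_mem_nhdsWithin] with s hs
  have hL := (Lf_pos hs).ne'
  field_simp

theorem cloning_deficiency_high_temperature_limit :
    Filter.Tendsto cloningDeficiency (nhdsWithin 1 (Set.Ioo 0 1)) (nhds (1 / 2)) := by
  have hA := (Real.continuous_exp.tendsto _).comp A_tendsto
  have hB := (Real.continuous_exp.tendsto _).comp B_tendsto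
  have h := ((tendsto_const_nhds (x := (2:ℝ))).mul hA).sub
    ((tendsto_const_nhds (x := (2:ℝ))).mul hB)
  have hval : 2 * Real.exp (-Real.log 2) - 2 * Real.exp (-(2 * Real.log 2)) = 1 / 2 := by
    rw [show -(2 * Real.log 2) = -Real.log 2 + -Real.log 2 by ring, Real.exp_add,
      Real.exp_neg, Real.exp_log (by norm_num : (0:ℝ) < 2)]
    norm_num
  rw [hval] at h
  refine h.congr' ?_
  filter_upwards [self_mem_nhdsWithin] with s hs
  have hs0 : (0:ℝ) < s := hs.1
  have ht0 : (0:ℝ) < (1 + s) / 2 := by linarith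
  have hn : (mf s + 1 : ℕ) = ⌊Real.log 2 / (Real.log (1 + s) - Real.log (2 * s))⌋₊ + 1 := rfl
  have e1 : Real.exp (((mf s : ℝ) + 1) * Real.log ((1 + s) / 2)) = ((1 + s) / 2) ^ (mf s + 1) := by
    rw [show ((mf s : ℝ) + 1) = ((mf s + 1 : ℕ) : ℝ) by push_cast; ring,
      Real.exp_nat_mul, Real.exp_log ht0]
  have e2 : Real.exp (((mf s : ℝ) + 1) * Real.log s) = s ^ (mf s + 1) := by
    rw [show ((mf s : ℝ) + 1) = ((mf s + 1 : ℕ) : ℝ) by push_cast; ring,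
      Real.exp_nat_mul, Real.exp_log hs0]
  simp only [Function.comp_apply, cloningDeficiency]
  rw [show ⌊Real.log 2 / (Real.log (1 + s) - Real.log (2 * s))⌋₊ = mf s from rfl, e1, e2]
end
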